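/- arXiv:1906.05504 — 2 statements merged into one kernel-verified Lean document; each statement's English description precedes it below -/
import Mathlib

section
/- Let G be a finite simple graph and let k be a positive integer with k ≥ ω(G), the clique number of G. Then the disjoint union kG of k copies of G satisfies Z_f(kG) = χ_f(kG). -/
open Finset

/-- A finset is an independent set in `G`. -/
def IsIndepF {V : Type*} (G : SimpleGraph V) (s : Finset V) : Prop :=
  ∀ u ∈ s, ∀ v ∈ s, ¬ G.Adj u v

/-- A finset is a clique in `G`. -/
def IsCliqueF {V : Type*} (G : SimpleGraph V) (s : Finset V) : Prop :=
  ∀ u ∈ s, ∀ v ∈ s, u ≠ v → G.Adj u v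

/-- A fractional cocoloring: nonnegative weights on finsets, supported on cliques and
independent sets, covering every vertex with total weight at least 1. -/
def IsFracCocoloring {V : Type*} [Fintype V] [DecidableEq V] (G : SimpleGraph V)
    (w : Finset V → ℝ) : Prop :=
  (∀ s, 0 ≤ w s) ∧
  (∀ s, w s ≠ 0 → IsCliqueF G s ∨ IsIndepF G s) ∧
  (∀ v : V, 1 ≤ ∑ s ∈ Finset.univ.filter (fun s : Finset V => v ∈ s), w s)

/-- The fractional cochromatic number: the least total weight of a fractional cocoloring. -/
noncomputable def Zf {V : Type*} [Fintype V] [DecidableEq V] (G : SimpleGraph V) : ℝ :=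
  sInf {x | ∃ w, IsFracCocoloring G w ∧ x = ∑ s : Finset V, w s}

/-- A fractional coloring: nonnegative weights on finsets, supported on independent sets,
covering every vertex with total weight at least 1. -/
def IsFracColoring {V : Type*} [Fintype V] [DecidableEq V] (G : SimpleGraph V)
    (w : Finset V → ℝ) : Prop :=
  (∀ s, 0 ≤ w s) ∧
  (∀ s, w s ≠ 0 → IsIndepF G s) ∧
  (∀ v : V, 1 ≤ ∑ s ∈ Finset.univ.filter (fun s : Finset V => v ∈ s), w s)

/-- The fractional chromatic number: the least total weight of a fractional coloring. -/
noncomputable def chif {V : Type*} [Fintype V] [DecidableEq V] (G : SimpleGraph V) : ℝ :=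
  sInf {x | ∃ w, IsFracColoring G w ∧ x = ∑ s : Finset V, w s}

/-- The disjoint union of `k` copies of `G`. -/
def copies {V : Type*} (k : ℕ) (G : SimpleGraph V) : SimpleGraph (Fin k × V) where
  Adj a b := a.1 = b.1 ∧ G.Adj a.2 b.2
  symm := ⟨fun _ _ h => ⟨h.1.symm, h.2.symm⟩⟩
  loopless := ⟨fun a h => G.loopless.irrefl a.2 h.2⟩

/-- The clique number: the largest size of a clique. -/
noncomputable def cliqueNumF {V : Type*} [Fintype V] (G : SimpleGraph V) : ℕ :=
  sSup {n : ℕ | ∃ s : Finset V, IsCliqueF G s ∧ s.card = n}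

set_option linter.unusedSectionVars false

namespace ZfAux

variable {V : Type*} [Fintype V] [DecidableEq V] {k : ℕ} [NeZero k]

lemma copies_adj (G : SimpleGraph V) (a b : Fin k × V) :
    (copies k G).Adj a b ↔ a.1 = b.1 ∧ G.Adj a.2 b.2 := Iff.rfl

/-- The shift automorphism on vertices of `copies k G`. -/
def shiftEquiv (d : Fin k) : Fin k × V ≃ Fin k × V :=
  (Equiv.addRight d).prodCongr (Equiv.refl V)

@[simp] lemma shiftEquiv_apply (d : Fin k) (p : Fin k × V) :
    shiftEquiv d p = (p.1 + d, p.2) := rfl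

@[simp] lemma shiftEquiv_symm_apply (d : Fin k) (p : Fin k × V) :
    (shiftEquiv d).symm p = (p.1 - d, p.2) := by
  simp [shiftEquiv, Equiv.prodCongr, Equiv.addRight, sub_eq_add_neg]
  rfl

/-- Shift on finsets. -/
def shiftFS (d : Fin k) : Finset (Fin k × V) ≃ Finset (Fin k × V) :=
  (shiftEquiv d).finsetCongr

def shiftS (d : Fin k) (s : Finset (Fin k × V)) : Finset (Fin k × V) := shiftFS d s

lemma mem_shiftS (d : Fin k) (s : Finset (Fin k × V)) (x : Fin k × V) :
    x ∈ shiftS d s ↔ (x.1 - d, x.2) ∈ s := by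
  rw [shiftS, shiftFS, Equiv.finsetCongr_apply, Finset.mem_map_equiv, shiftEquiv_symm_apply]

lemma shiftS_shiftS (d e : Fin k) (s : Finset (Fin k × V)) :
    shiftS e (shiftS d s) = shiftS (d + e) s := by
  ext x
  rw [mem_shiftS, mem_shiftS, mem_shiftS, sub_sub, add_comm e d]

lemma adj_shiftEquiv (G : SimpleGraph V) (d : Fin k) (a b : Fin k × V) :
    (copies k G).Adj (shiftEquiv d a) (shiftEquiv d b) ↔ (copies k G).Adj a b := by
  simp [copies_adj]

lemma isIndepF_shiftS (G : SimpleGraph V) (d : Fin k) (s : Finset (Fin k × V)) :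
    IsIndepF (copies k G) (shiftS d s) ↔ IsIndepF (copies k G) s := by
  have hmap : shiftS d s = s.map (shiftEquiv d).toEmbedding := rfl
  constructor
  · intro h u hu v hv
    have := h (shiftEquiv d u) (by rw [hmap]; exact Finset.mem_map_of_mem _ hu)
      (shiftEquiv d v) (by rw [hmap]; exact Finset.mem_map_of_mem _ hv)
    rw [adj_shiftEquiv] at this
    exact this
  · intro h u hu v hv
    rw [hmap, Finset.mem_map] at hu hv
    obtain ⟨a, ha, rfl⟩ := hu
    obtain ⟨b, hb, rfl⟩ := hv
    rw [Equiv.coe_toEmbedding, adj_shiftEquiv]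
    exact h a ha b hb

lemma isCliqueF_shiftS (G : SimpleGraph V) (d : Fin k) (s : Finset (Fin k × V)) :
    IsCliqueF (copies k G) (shiftS d s) ↔ IsCliqueF (copies k G) s := by
  have hmap : shiftS d s = s.map (shiftEquiv d).toEmbedding := rfl
  constructor
  · intro h u hu v hv huv
    have := h (shiftEquiv d u) (by rw [hmap]; exact Finset.mem_map_of_mem _ hu)
      (shiftEquiv d v) (by rw [hmap]; exact Finset.mem_map_of_mem _ hv)
      (fun hc => huv ((shiftEquiv d).injective hc))
    rwa [adj_shiftEquiv] at this
  · intro h u hu v hv huv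
    rw [hmap, Finset.mem_map] at hu hv
    obtain ⟨a, ha, rfl⟩ := hu
    obtain ⟨b, hb, rfl⟩ := hv
    rw [Equiv.coe_toEmbedding, adj_shiftEquiv]
    exact h a ha b hb (fun hab => huv (by rw [hab]))

/-- A "pure clique": a clique which is not independent (so it has an edge). -/
def PureC (G : SimpleGraph V) (s : Finset (Fin k × V)) : Prop :=
  IsCliqueF (copies k G) s ∧ ¬ IsIndepF (copies k G) s

lemma pureC_shiftS (G : SimpleGraph V) (d : Fin k) (s : Finset (Fin k × V)) :
    PureC G (shiftS d s) ↔ PureC G s := by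
  unfold PureC
  rw [isIndepF_shiftS, isCliqueF_shiftS]

def projT (s : Finset (Fin k × V)) : Finset V := s.image Prod.snd

lemma pure_struct {G : SimpleGraph V} {s : Finset (Fin k × V)} (hs : PureC G s) :
    ∃ i : Fin k, ∀ p ∈ s, p.1 = i := by
  obtain ⟨hc, hi⟩ := hs
  rw [IsIndepF] at hi
  push_neg at hi
  obtain ⟨a, ha, b, hb, hadj⟩ := hi
  refine ⟨a.1, fun p hp => ?_⟩
  by_cases hpa : p = a
  · rw [hpa]
  · exact (hc p hp a ha hpa).1

lemma pure_snd_injOn {G : SimpleGraph V} {s : Finset (Fin k × V)} (hs : PureC G s) :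
    Set.InjOn Prod.snd (s : Set (Fin k × V)) := by
  intro p hp q hq h2
  by_contra hne
  exact G.loopless.irrefl p.2 (h2 ▸ (hs.1 p hp q hq hne).2)

lemma projT_clique {G : SimpleGraph V} {s : Finset (Fin k × V)} (hs : PureC G s) :
    IsCliqueF G (projT s) := by
  intro u hu v hv huv
  rw [projT, Finset.mem_image] at hu hv
  obtain ⟨p, hp, rfl⟩ := hu
  obtain ⟨q, hq, rfl⟩ := hv
  exact (hs.1 p hp q hq (fun h => huv (by rw [h]))).2

lemma cliqueF_card_le (G : SimpleGraph V) (T : Finset V) (h : IsCliqueF G T) :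
    T.card ≤ cliqueNumF G := by
  apply le_csSup
  · refine ⟨Fintype.card V, ?_⟩
    rintro n ⟨s, -, rfl⟩
    simpa using s.card_le_univ
  · exact ⟨T, h, rfl⟩

lemma pure_projT_card_le {G : SimpleGraph V} (hk : cliqueNumF G ≤ k)
    {s : Finset (Fin k × V)} (hs : PureC G s) : (projT s).card ≤ k :=
  le_trans (cliqueF_card_le G _ (projT_clique hs)) hk

lemma exists_injOn (T : Finset V) (h : T.card ≤ k) :
    ∃ g : V → Fin k, Set.InjOn g (T : Set V) := by
  have h2 : Fintype.card ↥(T : Finset V) ≤ Fintype.card (Fin k) := by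
    simpa [Fintype.card_coe] using h
  obtain ⟨e⟩ := Function.Embedding.nonempty_of_card_le h2
  refine ⟨fun v => if hv : v ∈ T then e ⟨v, hv⟩ else 0, ?_⟩
  intro u hu v hv he
  simp only [Finset.mem_coe] at hu hv
  have he' : e ⟨u, hu⟩ = e ⟨v, hv⟩ := by simpa [dif_pos hu, dif_pos hv] using he
  exact Subtype.ext_iff.mp (e.injective he')

noncomputable def gfun (s : Finset (Fin k × V)) : V → Fin k :=
  if h : (projT s).card ≤ k then Classical.choose (exists_injOn (projT s) h) else fun _ => 0

lemma gfun_injOn {s : Finset (Fin k × V)} (h : (projT s).card ≤ k) :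
    Set.InjOn (gfun s) ((projT s : Finset V) : Set V) := by
  rw [gfun, dif_pos h]
  exact Classical.choose_spec (exists_injOn (projT s) h)

/-- Spread of a clique: put each projected vertex in its own copy, rotated by `r`. -/
noncomputable def spreadS (s : Finset (Fin k × V)) (r : Fin k) : Finset (Fin k × V) :=
  (projT s).image (fun v => (gfun s v + r, v))

lemma mem_spreadS (s : Finset (Fin k × V)) (r : Fin k) (x : Fin k × V) :
    x ∈ spreadS s r ↔ x.2 ∈ projT s ∧ x.1 = gfun s x.2 + r := by
  rw [spreadS, Finset.mem_image]
  constructor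
  · rintro ⟨v, hv, rfl⟩
    exact ⟨hv, rfl⟩
  · rintro ⟨h1, h2⟩
    exact ⟨x.2, h1, by rw [← h2]⟩

lemma spreadS_indep (G : SimpleGraph V) {s : Finset (Fin k × V)}
    (h : (projT s).card ≤ k) (r : Fin k) : IsIndepF (copies k G) (spreadS s r) := by
  intro u hu v hv hadj
  rw [mem_spreadS] at hu hv
  rw [copies_adj] at hadj
  have h1 : gfun s u.2 = gfun s v.2 := by
    have := hadj.1
    rw [hu.2, hv.2] at this
    exact add_right_cancel this
  have h2 : u.2 = v.2 := gfun_injOn h hu.1 hv.1 h1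
  exact G.loopless.irrefl u.2 (by rw [h2] at hadj ⊢; exact hadj.2)

open Classical in
lemma sum_spread_indicator (s : Finset (Fin k × V)) (x : Fin k × V) (c : ℝ) :
    ∑ r : Fin k, (if x ∈ spreadS s r then c else 0) = if x.2 ∈ projT s then c else 0 := by
  by_cases hx : x.2 ∈ projT s
  · rw [if_pos hx]
    have hiff : ∀ r : Fin k, (x ∈ spreadS s r) ↔ r = x.1 - gfun s x.2 := by
      intro r
      rw [mem_spreadS]
      constructor
      · rintro ⟨-, h⟩
        rw [eq_sub_iff_add_eq, add_comm, ← h]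
      · rintro rfl
        exact ⟨hx, by rw [add_sub_cancel]⟩
    simp only [hiff]
    rw [Finset.sum_ite_eq' Finset.univ (x.1 - gfun s x.2) (fun _ => c), if_pos (Finset.mem_univ _)]
  · rw [if_neg hx]
    apply Finset.sum_eq_zero
    intro r _
    rw [if_neg]
    rw [mem_spreadS]
    tauto

open Classical in
lemma sum_copies_indicator {G : SimpleGraph V} {s : Finset (Fin k × V)} (hs : PureC G s)
    (v : V) (c : ℝ) :
    ∑ i : Fin k, (if (i, v) ∈ s then c else 0) = if v ∈ projT s then c else 0 := by
  obtain ⟨i₀, hi₀⟩ := pure_struct hs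
  have hiff : ∀ i : Fin k, ((i, v) ∈ s) ↔ (i = i₀ ∧ v ∈ projT s) := by
    intro i
    constructor
    · intro h
      exact ⟨hi₀ _ h, Finset.mem_image_of_mem _ h⟩
    · rintro ⟨hi, hv⟩
      rw [projT, Finset.mem_image] at hv
      obtain ⟨p, hp, hp2⟩ := hv
      have hp1 := hi₀ p hp
      have hpe : p = (i, v) := Prod.ext (by rw [hp1, hi]) hp2
      rwa [hpe] at hp
  simp only [hiff]
  by_cases hv : v ∈ projT s
  · simp only [hv, and_true]
    rw [Finset.sum_ite_eq' Finset.univ i₀ (fun _ => c)]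
    simp
  · simp [hv]

/-! ### Stage A: averaging over cyclic shifts -/

noncomputable def avgw (w : Finset (Fin k × V) → ℝ) (t : Finset (Fin k × V)) : ℝ :=
  (k : ℝ)⁻¹ * ∑ r : Fin k, w (shiftS r t)

lemma avgw_shift (w : Finset (Fin k × V) → ℝ) (d : Fin k) (t : Finset (Fin k × V)) :
    avgw w (shiftS d t) = avgw w t := by
  unfold avgw
  congr 1
  exact Fintype.sum_equiv (Equiv.addLeft d) _ _
    (fun r => by rw [shiftS_shiftS]; rfl)

lemma avgw_nonneg {w : Finset (Fin k × V) → ℝ} (hw : ∀ s, 0 ≤ w s) (t) :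
    0 ≤ avgw w t :=
  mul_nonneg (by positivity) (Finset.sum_nonneg fun r _ => hw _)

lemma avgw_sum (w : Finset (Fin k × V) → ℝ) :
    ∑ t : Finset (Fin k × V), avgw w t = ∑ t : Finset (Fin k × V), w t := by
  unfold avgw
  rw [← Finset.mul_sum, Finset.sum_comm]
  have hinner : ∀ r : Fin k, ∑ t : Finset (Fin k × V), w (shiftS r t)
      = ∑ t : Finset (Fin k × V), w t :=
    fun r => Fintype.sum_equiv (shiftFS r) _ _ (fun t => rfl)
  rw [Finset.sum_congr rfl (fun r _ => hinner r), Finset.sum_const, Finset.card_univ,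
    Fintype.card_fin, nsmul_eq_mul, ← mul_assoc,
    inv_mul_cancel₀ (Nat.cast_ne_zero.mpr (NeZero.ne k)), one_mul]

lemma avgw_support {G : SimpleGraph V} {w : Finset (Fin k × V) → ℝ}
    (hw : ∀ s, w s ≠ 0 → IsCliqueF (copies k G) s ∨ IsIndepF (copies k G) s)
    (t : Finset (Fin k × V)) (ht : avgw w t ≠ 0) :
    IsCliqueF (copies k G) t ∨ IsIndepF (copies k G) t := by
  unfold avgw at ht
  have : ∃ r : Fin k, w (shiftS r t) ≠ 0 := by
    by_contra hc
    push_neg at hc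
    rw [Finset.sum_eq_zero (fun r _ => hc r), mul_zero] at ht
    exact ht rfl
  obtain ⟨r, hr⟩ := this
  rcases hw _ hr with h | h
  · exact Or.inl ((isCliqueF_shiftS G r t).mp h)
  · exact Or.inr ((isIndepF_shiftS G r t).mp h)

open Classical in
lemma coverage_eq (w : Finset (Fin k × V) → ℝ) (x : Fin k × V) :
    ∑ t ∈ Finset.univ.filter (fun t : Finset (Fin k × V) => x ∈ t), w t
      = ∑ t : Finset (Fin k × V), (if x ∈ t then w t else 0) :=
  Finset.sum_filter _ _

open Classical in
lemma avgw_coverage {w : Finset (Fin k × V) → ℝ}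
    (hcov : ∀ v : Fin k × V,
      1 ≤ ∑ s ∈ Finset.univ.filter (fun s : Finset (Fin k × V) => v ∈ s), w s)
    (x : Fin k × V) :
    1 ≤ ∑ t ∈ Finset.univ.filter (fun t : Finset (Fin k × V) => x ∈ t), avgw w t := by
  rw [coverage_eq]
  have hstep : ∀ t : Finset (Fin k × V), (if x ∈ t then avgw w t else 0)
      = (k : ℝ)⁻¹ * ∑ r : Fin k, (if x ∈ t then w (shiftS r t) else 0) := by
    intro t
    unfold avgw
    split_ifs with h
    · rfl
    · rw [Finset.sum_eq_zero (fun r _ => rfl), mul_zero]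
  rw [Finset.sum_congr rfl (fun t _ => hstep t), ← Finset.mul_sum, Finset.sum_comm]
  have hinner : ∀ r : Fin k, ∑ t : Finset (Fin k × V), (if x ∈ t then w (shiftS r t) else 0)
      = ∑ t : Finset (Fin k × V), (if (x.1 + r, x.2) ∈ t then w t else 0) := by
    intro r
    refine Fintype.sum_equiv (shiftFS r) _ _ (fun t => ?_)
    have hmem : ((x.1 + r, x.2) ∈ shiftS r t) ↔ x ∈ t := by
      rw [mem_shiftS]
      simp [add_sub_cancel_right]
    have heq : (shiftFS r) t = shiftS r t := rfl
    rw [heq]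
    by_cases h : x ∈ t
    · rw [if_pos h, if_pos (hmem.mpr h)]
    · rw [if_neg h, if_neg (fun hc => h (hmem.mp hc))]
  rw [Finset.sum_congr rfl (fun r _ => hinner r)]
  have hge : ∀ r : Fin k, (1:ℝ) ≤ ∑ t : Finset (Fin k × V),
      (if (x.1 + r, x.2) ∈ t then w t else 0) := by
    intro r
    rw [← coverage_eq]
    exact hcov _
  have : (k : ℝ) ≤ ∑ r : Fin k, ∑ t : Finset (Fin k × V),
      (if (x.1 + r, x.2) ∈ t then w t else 0) := by
    calc (k : ℝ) = ∑ _r : Fin k, (1:ℝ) := by simp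
    _ ≤ _ := Finset.sum_le_sum (fun r _ => hge r)
  calc (1:ℝ) = (k : ℝ)⁻¹ * k := by
        rw [inv_mul_cancel₀ (Nat.cast_ne_zero.mpr (NeZero.ne k))]
  _ ≤ _ := by
        apply mul_le_mul_of_nonneg_left this (by positivity)

/-! ### Stage B: converting a shift-invariant cocoloring into a coloring -/

open Classical in
/-- The coloring obtained by keeping independent sets and spreading pure cliques. -/
noncomputable def colw (G : SimpleGraph V) (w : Finset (Fin k × V) → ℝ)
    (t : Finset (Fin k × V)) : ℝ :=
  (if IsIndepF (copies k G) t then w t else 0) +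
    ∑ s : Finset (Fin k × V), ∑ r : Fin k,
      (if PureC G s ∧ t = spreadS s r then w s / k else 0)

open Classical in
lemma w_decomp {G : SimpleGraph V} {w : Finset (Fin k × V) → ℝ}
    (hw : ∀ s, w s ≠ 0 → IsCliqueF (copies k G) s ∨ IsIndepF (copies k G) s)
    (t : Finset (Fin k × V)) :
    w t = (if IsIndepF (copies k G) t then w t else 0)
      + (if PureC G t then w t else 0) := by
  by_cases hi : IsIndepF (copies k G) t
  · rw [if_pos hi, if_neg (fun h : PureC G t => h.2 hi), add_zero]
  · rw [if_neg hi]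
    by_cases hc : IsCliqueF (copies k G) t
    · rw [if_pos ⟨hc, hi⟩, zero_add]
    · have hz : w t = 0 := by
        by_contra h
        rcases hw t h with h' | h'
        exacts [hc h', hi h']
      rw [hz]
      simp [PureC, hc]

open Classical in
lemma colw_nonneg {G : SimpleGraph V} {w : Finset (Fin k × V) → ℝ}
    (hw0 : ∀ s, 0 ≤ w s) (t : Finset (Fin k × V)) : 0 ≤ colw G w t := by
  unfold colw
  apply add_nonneg
  · split_ifs
    exacts [hw0 t, le_refl 0]
  · apply Finset.sum_nonneg
    intro s _
    apply Finset.sum_nonneg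
    intro r _
    split_ifs
    exacts [div_nonneg (hw0 s) (Nat.cast_nonneg k), le_refl 0]

open Classical in
lemma colw_support {G : SimpleGraph V} {w : Finset (Fin k × V) → ℝ}
    (hk : cliqueNumF G ≤ k) (t : Finset (Fin k × V)) (ht : colw G w t ≠ 0) :
    IsIndepF (copies k G) t := by
  by_contra hi
  apply ht
  unfold colw
  rw [if_neg hi, zero_add]
  apply Finset.sum_eq_zero
  intro s _
  apply Finset.sum_eq_zero
  intro r _
  rw [if_neg]
  rintro ⟨hp, rfl⟩
  exact hi (spreadS_indep G (pure_projT_card_le hk hp) r)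

open Classical in
lemma sum_ite_eq_finset (A : Finset (Fin k × V)) (p : Finset (Fin k × V) → Prop) (c : ℝ) :
    ∑ t : Finset (Fin k × V), (if p t ∧ t = A then c else 0) = if p A then c else 0 := by
  have hterm : ∀ t : Finset (Fin k × V),
      (if p t ∧ t = A then c else 0) = if t = A then (if p t then c else 0) else 0 := by
    intro t
    by_cases h1 : t = A <;> by_cases h2 : p t <;> simp [h1, h2]
  rw [Finset.sum_congr rfl (fun t _ => hterm t),
    Finset.sum_ite_eq' Finset.univ A (fun t => if p t then c else 0), if_pos (Finset.mem_univ _)]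

open Classical in
lemma colw_sum {G : SimpleGraph V} {w : Finset (Fin k × V) → ℝ}
    (hw : ∀ s, w s ≠ 0 → IsCliqueF (copies k G) s ∨ IsIndepF (copies k G) s) :
    ∑ t : Finset (Fin k × V), colw G w t = ∑ t : Finset (Fin k × V), w t := by
  unfold colw
  rw [Finset.sum_add_distrib]
  have h2 : (∑ t : Finset (Fin k × V), ∑ s : Finset (Fin k × V), ∑ r : Fin k,
      (if PureC G s ∧ t = spreadS s r then w s / k else 0))
      = ∑ t : Finset (Fin k × V), (if PureC G t then w t else 0) := by
    rw [Finset.sum_comm]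
    refine Finset.sum_congr rfl (fun s _ => ?_)
    rw [Finset.sum_comm]
    have hinner : ∀ r : Fin k, (∑ t : Finset (Fin k × V),
        (if PureC G s ∧ t = spreadS s r then w s / k else 0))
        = if PureC G s then w s / k else 0 := by
      intro r
      exact sum_ite_eq_finset (spreadS s r) (fun _ => PureC G s) (w s / k)
    rw [Finset.sum_congr rfl (fun r _ => hinner r), Finset.sum_const, Finset.card_univ,
      Fintype.card_fin]
    by_cases hp : PureC G s
    · rw [if_pos hp, if_pos hp, nsmul_eq_mul,
        mul_div_cancel₀ (w s) (Nat.cast_ne_zero.mpr (NeZero.ne k))]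
    · rw [if_neg hp, if_neg hp, smul_zero]
  rw [h2, ← Finset.sum_add_distrib]
  exact Finset.sum_congr rfl (fun t _ => (w_decomp hw t).symm)

open Classical in
lemma sum_pure_mem_const {G : SimpleGraph V} {w : Finset (Fin k × V) → ℝ}
    (hinv : ∀ d t, w (shiftS d t) = w t) (i j : Fin k) (v : V) :
    (∑ s : Finset (Fin k × V), (if PureC G s ∧ (i, v) ∈ s then w s else 0))
      = ∑ s : Finset (Fin k × V), (if PureC G s ∧ (j, v) ∈ s then w s else 0) := by
  refine Fintype.sum_equiv (shiftFS (j - i)) _ _ (fun s => ?_)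
  have heq : shiftFS (j - i) s = shiftS (j - i) s := rfl
  rw [heq]
  have h1 : PureC G (shiftS (j - i) s) ↔ PureC G s := pureC_shiftS G _ s
  have h2 : ((j, v) ∈ shiftS (j - i) s) ↔ (i, v) ∈ s := by
    rw [mem_shiftS]
    simp [sub_sub_cancel]
  have h3 : w (shiftS (j - i) s) = w s := hinv _ _
  by_cases h : PureC G s ∧ (i, v) ∈ s
  · rw [if_pos h, if_pos ⟨h1.mpr h.1, h2.mpr h.2⟩, h3]
  · rw [if_neg h, if_neg (fun hc => h ⟨h1.mp hc.1, h2.mp hc.2⟩)]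

open Classical in
lemma colw_coverage {G : SimpleGraph V} {w : Finset (Fin k × V) → ℝ}
    (hw : ∀ s, w s ≠ 0 → IsCliqueF (copies k G) s ∨ IsIndepF (copies k G) s)
    (hinv : ∀ d t, w (shiftS d t) = w t)
    (hcov : ∀ v : Fin k × V,
      1 ≤ ∑ s ∈ Finset.univ.filter (fun s : Finset (Fin k × V) => v ∈ s), w s)
    (x : Fin k × V) :
    1 ≤ ∑ t ∈ Finset.univ.filter (fun t : Finset (Fin k × V) => x ∈ t), colw G w t := by
  rw [coverage_eq]
  have hsplit : ∀ t : Finset (Fin k × V), (if x ∈ t then colw G w t else 0)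
      = (if x ∈ t then (if IsIndepF (copies k G) t then w t else 0) else 0)
        + ∑ s : Finset (Fin k × V), ∑ r : Fin k,
            (if (PureC G s ∧ x ∈ t) ∧ t = spreadS s r then w s / k else 0) := by
    intro t
    by_cases h : x ∈ t
    · rw [if_pos h, if_pos h]
      unfold colw
      congr 1
      refine Finset.sum_congr rfl (fun s _ => Finset.sum_congr rfl (fun r _ => ?_))
      by_cases hc : PureC G s ∧ t = spreadS s r
      · rw [if_pos hc, if_pos ⟨⟨hc.1, h⟩, hc.2⟩]
      · rw [if_neg hc, if_neg (fun hd => hc ⟨hd.1.1, hd.2⟩)]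
    · rw [if_neg h, if_neg h, zero_add]
      symm
      apply Finset.sum_eq_zero
      intro s _
      apply Finset.sum_eq_zero
      intro r _
      exact if_neg (fun hd => h hd.1.2)
  rw [Finset.sum_congr rfl (fun t _ => hsplit t), Finset.sum_add_distrib]
  -- compute the clique part
  have hclique : (∑ t : Finset (Fin k × V), ∑ s : Finset (Fin k × V), ∑ r : Fin k,
      (if (PureC G s ∧ x ∈ t) ∧ t = spreadS s r then w s / k else 0))
      = ∑ t : Finset (Fin k × V), (if PureC G t ∧ x ∈ t then w t else 0) := by
    rw [Finset.sum_comm]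
    have hstep1 : ∀ s : Finset (Fin k × V), (∑ t : Finset (Fin k × V), ∑ r : Fin k,
        (if (PureC G s ∧ x ∈ t) ∧ t = spreadS s r then w s / k else 0))
        = if PureC G s ∧ x.2 ∈ projT s then w s / k else 0 := by
      intro s
      rw [Finset.sum_comm]
      have hinner : ∀ r : Fin k, (∑ t : Finset (Fin k × V),
          (if (PureC G s ∧ x ∈ t) ∧ t = spreadS s r then w s / k else 0))
          = if PureC G s ∧ x ∈ spreadS s r then w s / k else 0 := by
        intro r
        rw [Finset.sum_eq_single (spreadS s r)]
        · simp
        · intro t _ hne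
          exact if_neg (fun hc => hne hc.2)
        · intro h
          exact absurd (Finset.mem_univ _) h
      rw [Finset.sum_congr rfl (fun r _ => hinner r)]
      by_cases hp : PureC G s
      · simp only [hp, true_and]
        exact sum_spread_indicator s x (w s / k)
      · simp [hp]
    rw [Finset.sum_congr rfl (fun s _ => hstep1 s)]
    -- now rewrite `x.2 ∈ projT s` as a sum over copies
    have hstep2 : ∀ s : Finset (Fin k × V),
        (if PureC G s ∧ x.2 ∈ projT s then w s / k else 0)
        = (k : ℝ)⁻¹ * ∑ i : Fin k, (if PureC G s ∧ (i, x.2) ∈ s then w s else 0) := by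
      intro s
      by_cases hp : PureC G s
      · simp only [hp, true_and]
        rw [sum_copies_indicator hp x.2 (w s)]
        by_cases hv : x.2 ∈ projT s
        · rw [if_pos hv, if_pos hv, div_eq_inv_mul]
        · rw [if_neg hv, if_neg hv, mul_zero]
      · simp [hp]
    rw [Finset.sum_congr rfl (fun s _ => hstep2 s), ← Finset.mul_sum, Finset.sum_comm]
    have hstep3 : ∀ i : Fin k,
        (∑ s : Finset (Fin k × V), (if PureC G s ∧ (i, x.2) ∈ s then w s else 0))
        = ∑ s : Finset (Fin k × V), (if PureC G s ∧ (x.1, x.2) ∈ s then w s else 0) :=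
      fun i => sum_pure_mem_const hinv i x.1 x.2
    rw [Finset.sum_congr rfl (fun i _ => hstep3 i), Finset.sum_const, Finset.card_univ,
      Fintype.card_fin, nsmul_eq_mul, ← mul_assoc,
      inv_mul_cancel₀ (Nat.cast_ne_zero.mpr (NeZero.ne k)), one_mul]
  rw [hclique]
  -- recombine to the coverage of `w`
  have hrecomb : (∑ t : Finset (Fin k × V),
      (if x ∈ t then (if IsIndepF (copies k G) t then w t else 0) else 0))
      + (∑ t : Finset (Fin k × V), (if PureC G t ∧ x ∈ t then w t else 0))
      = ∑ t : Finset (Fin k × V), (if x ∈ t then w t else 0) := by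
    rw [← Finset.sum_add_distrib]
    refine Finset.sum_congr rfl (fun t _ => ?_)
    by_cases h : x ∈ t
    · rw [if_pos h, if_pos h]
      by_cases hp : PureC G t
      · rw [if_neg hp.2, if_pos (show PureC G t ∧ x ∈ t from ⟨hp, h⟩), zero_add]
      · rw [if_neg (fun hc : PureC G t ∧ x ∈ t => hp hc.1), add_zero]
        by_cases hi : IsIndepF (copies k G) t
        · rw [if_pos hi]
        · have hz : w t = 0 := by
            by_contra hnz
            rcases hw t hnz with h' | h'
            exacts [hp ⟨h', hi⟩, hi h']
          rw [if_neg hi, hz]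
    · rw [if_neg h, if_neg h, if_neg (fun hc : PureC G t ∧ x ∈ t => h hc.2), add_zero]
  rw [hrecomb, ← coverage_eq]
  exact hcov x

/-! ### Putting it together -/

lemma exists_coloring {G : SimpleGraph V} (hk : cliqueNumF G ≤ k)
    {w : Finset (Fin k × V) → ℝ} (hw : IsFracCocoloring (copies k G) w) :
    ∃ u, IsFracColoring (copies k G) u ∧
      (∑ s : Finset (Fin k × V), u s) = ∑ s : Finset (Fin k × V), w s := by
  obtain ⟨h0, hsup, hcov⟩ := hw
  have hw'sup := avgw_support hsup
  refine ⟨colw G (avgw w),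
    ⟨colw_nonneg (avgw_nonneg h0), colw_support hk,
      fun v => colw_coverage hw'sup (avgw_shift w) (fun v => avgw_coverage hcov v) v⟩, ?_⟩
  rw [colw_sum hw'sup, avgw_sum]

end ZfAux

/-- If `k` is a positive integer with `k ≥ ω(G)`, then `Z_f(kG) = χ_f(kG)`. -/
theorem Zf_copies_eq_chif_copies {V : Type*} [Fintype V] [DecidableEq V]
    (G : SimpleGraph V) (k : ℕ) (hk0 : 0 < k) (hk : cliqueNumF G ≤ k) :
    Zf (copies k G) = chif (copies k G) := by
  haveI : NeZero k := ⟨hk0.ne'⟩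
  unfold Zf chif
  congr 1
  ext x
  simp only [Set.mem_setOf_eq]
  constructor
  · rintro ⟨w, hw, rfl⟩
    obtain ⟨u, hu, hsum⟩ := ZfAux.exists_coloring hk hw
    exact ⟨u, hu, hsum.symm⟩
  · rintro ⟨w, hw, rfl⟩
    exact ⟨w, ⟨hw.1, fun s hs => Or.inr (hw.2.1 s hs), hw.2.2⟩, rfl⟩
end

section
/- Let G be a finite simple graph with clique number at most k, and let f be a color labeling of the disjoint union kG of k copies of G. Define f' on kG by letting f'(v) be the average of f over the k copies of v. Then f' is a cocolor labeling of kG with the same weight as f. -/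
open Finset

/-- A color labeling: nonnegative vertex weights summing to at most 1 on every
independent set. -/
def IsColorLabeling {V : Type*} (G : SimpleGraph V) (g : V → ℝ) : Prop :=
  (∀ v, 0 ≤ g v) ∧
  ∀ s : Finset V, IsIndepF G s → ∑ v ∈ s, g v ≤ 1

/-- A cocolor labeling: nonnegative vertex weights summing to at most 1 on every clique
and on every independent set. -/
def IsCocolorLabeling {V : Type*} (G : SimpleGraph V) (g : V → ℝ) : Prop :=
  (∀ v, 0 ≤ g v) ∧
  ∀ s : Finset V, IsCliqueF G s ∨ IsIndepF G s → ∑ v ∈ s, g v ≤ 1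

lemma copies_adj {V : Type*} {k : ℕ} {G : SimpleGraph V} {a b : Fin k × V} :
    (copies k G).Adj a b ↔ a.1 = b.1 ∧ G.Adj a.2 b.2 := Iff.rfl

/-- If `G` has clique number at most `k` and `f` is a color labeling of
`kG`, then the labeling `f'` obtained by averaging `f` over the `k` copies of each vertex
is a cocolor labeling of `kG` with the same weight as `f`. -/
theorem average_colorLabeling_isCocolorLabeling {V : Type*} [Fintype V]
    (G : SimpleGraph V) (k : ℕ)
    (hω : ∀ s : Finset V, IsCliqueF G s → s.card ≤ k)
    (f : Fin k × V → ℝ) (hf : IsColorLabeling (copies k G) f) :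
    IsCocolorLabeling (copies k G) (fun p => (∑ j : Fin k, f (j, p.2)) / (k : ℝ)) ∧
    (∑ p : Fin k × V, (∑ j : Fin k, f (j, p.2)) / (k : ℝ)) = ∑ p : Fin k × V, f p := by
  classical
  rcases Nat.eq_zero_or_pos k with hk | hk
  · subst hk
    haveI : IsEmpty (Fin 0 × V) := ⟨fun p => p.1.elim0⟩
    refine ⟨⟨fun v => v.1.elim0, fun s _ => ?_⟩, ?_⟩
    · have : s = ∅ := Finset.eq_empty_of_isEmpty s
      simp [this]
    · simp
  haveI : NeZero k := ⟨hk.ne'⟩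
  have hkR : (0 : ℝ) < k := by exact_mod_cast hk
  -- column sums are ≤ 1
  have hA : ∀ v : V, ∑ j : Fin k, f (j, v) ≤ 1 := by
    intro v
    have hinj : Function.Injective (fun j : Fin k => ((j, v) : Fin k × V)) := by
      intro a b h; simpa using congrArg Prod.fst h
    have hind : IsIndepF (copies k G) (Finset.univ.map ⟨_, hinj⟩) := by
      intro u hu w hw hadj
      simp only [Finset.mem_map, Finset.mem_univ, Function.Embedding.coeFn_mk] at hu hw
      obtain ⟨a, _, rfl⟩ := hu
      obtain ⟨b, _, rfl⟩ := hw
      exact G.loopless.irrefl v hadj.2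
    have := hf.2 _ hind
    rwa [Finset.sum_map] at this
  -- shifted independent sets
  have hB : ∀ s : Finset (Fin k × V), IsIndepF (copies k G) s → ∀ j : Fin k,
      ∑ p ∈ s, f (p.1 + j, p.2) ≤ 1 := by
    intro s hs j
    have hinj : Function.Injective (fun p : Fin k × V => ((p.1 + j, p.2) : Fin k × V)) := by
      intro a b h
      simp only [Prod.mk.injEq] at h
      exact Prod.ext (add_right_cancel h.1) h.2
    have hind : IsIndepF (copies k G) (s.image (fun p : Fin k × V => (p.1 + j, p.2))) := by
      intro u hu w hw hadj
      simp only [Finset.mem_image] at hu hw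
      obtain ⟨a, ha, rfl⟩ := hu
      obtain ⟨b, hb, rfl⟩ := hw
      exact hs a ha b hb ⟨add_right_cancel hadj.1, hadj.2⟩
    have := hf.2 _ hind
    rwa [Finset.sum_image (fun a _ b _ h => hinj h)] at this
  refine ⟨⟨fun p => div_nonneg (Finset.sum_nonneg fun j _ => hf.1 _) hkR.le, ?_⟩, ?_⟩
  · rintro s (hcl | hind)
    · -- clique case
      have hsnd : Set.InjOn Prod.snd (s : Set (Fin k × V)) := by
        intro a ha b hb h
        by_contra hne
        have := (hcl a ha b hb hne).2
        rw [h] at this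
        exact G.loopless.irrefl b.2 this
      have himg : IsCliqueF G (s.image Prod.snd) := by
        intro u hu v hv huv
        simp only [Finset.mem_image] at hu hv
        obtain ⟨a, ha, rfl⟩ := hu
        obtain ⟨b, hb, rfl⟩ := hv
        have hab : a ≠ b := fun h => huv (by rw [h])
        exact (hcl a ha b hb hab).2
      have hcard : s.card ≤ k := by
        rw [← Finset.card_image_of_injOn hsnd]
        exact hω _ himg
      calc ∑ p ∈ s, (∑ j : Fin k, f (j, p.2)) / (k : ℝ)
          ≤ ∑ _p ∈ s, 1 / (k : ℝ) :=
            Finset.sum_le_sum fun p _ => by gcongr; exact hA p.2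
        _ = s.card / k := by rw [Finset.sum_const, nsmul_eq_mul]; ring
        _ ≤ 1 := by
            rw [div_le_one hkR]; exact_mod_cast hcard
    · -- independent case
      have key : ∑ p ∈ s, ∑ j : Fin k, f (j, p.2) ≤ k := by
        have step : ∀ p : Fin k × V, ∑ j : Fin k, f (j, p.2) = ∑ j : Fin k, f (p.1 + j, p.2) := by
          intro p
          exact Fintype.sum_equiv (Equiv.addLeft p.1) _ _ (fun j => rfl) |>.symm
        calc ∑ p ∈ s, ∑ j : Fin k, f (j, p.2)
            = ∑ p ∈ s, ∑ j : Fin k, f (p.1 + j, p.2) := Finset.sum_congr rfl fun p _ => step p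
          _ = ∑ j : Fin k, ∑ p ∈ s, f (p.1 + j, p.2) := Finset.sum_comm
          _ ≤ ∑ _j : Fin k, (1 : ℝ) := Finset.sum_le_sum fun j _ => hB s hind j
          _ = k := by simp
      rw [← Finset.sum_div, div_le_one hkR]
      exact key
  · rw [Fintype.sum_prod_type, Fintype.sum_prod_type]
    rw [Finset.sum_comm]
    have : ∀ v : V, ∑ _i : Fin k, (∑ j : Fin k, f (j, v)) / (k : ℝ) = ∑ j : Fin k, f (j, v) := by
      intro v
      rw [Finset.sum_const, Finset.card_univ, Fintype.card_fin, nsmul_eq_mul,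
        mul_div_cancel₀ _ hkR.ne']
    simp_rw [this]
    exact Finset.sum_comm
end
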